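/- Let c be a standard Coxeter element of S_{n+1}, x ∈ NC(S_{n+1}, c), and m_x^c a standard form of x; for i ∈ {1,…,n} let x_i^c be the number of occurrences of the letter s_i in m_x^c. Let w be a fully commutative element of S_{n+1} having a reduced expression which is a subword (sublist) of m_x^c, and let n_i(w) be the number of occurrences of s_i in any reduced expression of w. Then: (1) if s_i is a center of m_x^c, then 2·n_i(w) − 1 ≤ x_i^c; (2) if s_i is not a center of m_x^c, then 2·n_i(w) ≤ x_i^c. -/

import Mathlib

namespace NCTL

/-- 0-indexed simple reflection: letter `i` (with `0 ≤ i < n`) stands for the simple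
transposition `s_{i+1}` of the paper, i.e. the swap of the 0-indexed points `i` and `i+1`
of `Fin (n+1)` (which represent the points `i+1` and `i+2` of `{1,…,n+1}`). -/
def simpleRefl (n : ℕ) (i : ℕ) : Equiv.Perm (Fin (n + 1)) :=
  if h : i < n then Equiv.swap ⟨i, by omega⟩ ⟨i + 1, by omega⟩ else 1

/-- The permutation represented by a word in the letters. -/
def wordProd (n : ℕ) (l : List ℕ) : Equiv.Perm (Fin (n + 1)) :=
  (l.map (simpleRefl n)).prod

/-- A valid word in the letters `0,…,n-1`. -/
def IsWord (n : ℕ) (l : List ℕ) : Prop := ∀ a ∈ l, a < n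

/-- A standard Coxeter element: a product of all the simple reflections, each occurring
exactly once, in some order. -/
def IsStdCox (n : ℕ) (c : Equiv.Perm (Fin (n + 1))) : Prop :=
  ∃ l : List ℕ, l.Perm (List.range n) ∧ wordProd n l = c

def IsTransposition {α : Type*} [DecidableEq α] (σ : Equiv.Perm α) : Prop :=
  ∃ a b, a ≠ b ∧ σ = Equiv.swap a b

/-- Reflection length: the minimal number of transpositions needed to write `w`. -/
noncomputable def reflLength (n : ℕ) (w : Equiv.Perm (Fin (n + 1))) : ℕ :=
  sInf {k | ∃ l : List (Equiv.Perm (Fin (n + 1))),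
    l.length = k ∧ (∀ t ∈ l, IsTransposition t) ∧ l.prod = w}

/-- The absolute order `u ≤_T v`. -/
def absLe (n : ℕ) (u v : Equiv.Perm (Fin (n + 1))) : Prop :=
  reflLength n u + reflLength n (u⁻¹ * v) = reflLength n v

/-- The set of noncrossing partitions `NC(S_{n+1}, c)`. -/
def NC (n : ℕ) (c : Equiv.Perm (Fin (n + 1))) : Set (Equiv.Perm (Fin (n + 1))) :=
  {x | absLe n x c}

/-- A block of `x`: an orbit of `x` of cardinality at least 2 (recorded as a `Finset`). -/
def IsBlock (n : ℕ) (x : Equiv.Perm (Fin (n + 1))) (B : Finset (Fin (n + 1))) : Prop :=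
  ∃ a, x a ≠ a ∧ ∀ b, b ∈ B ↔ x.SameCycle a b

/-- `k` is the minimum of some block of `x`. -/
def IsBlockMin (n : ℕ) (x : Equiv.Perm (Fin (n + 1))) (k : Fin (n + 1)) : Prop :=
  ∃ B, IsBlock n x B ∧ k ∈ B ∧ ∀ j ∈ B, k ≤ j

/-- `k` is the maximum of some block of `x`. -/
def IsBlockMax (n : ℕ) (x : Equiv.Perm (Fin (n + 1))) (k : Fin (n + 1)) : Prop :=
  ∃ B, IsBlock n x B ∧ k ∈ B ∧ ∀ j ∈ B, j ≤ k

/-- `k` is nested in the block `B`: `k ∉ B` and `min B < k < max B`. -/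
def Nested (n : ℕ) (k : Fin (n + 1)) (B : Finset (Fin (n + 1))) : Prop :=
  k ∉ B ∧ (∃ a ∈ B, a < k) ∧ ∃ b ∈ B, k < b

open Classical in
/-- `D_x` : the support of `x` minus the set of minima of blocks of `x`. -/
noncomputable def Dset (n : ℕ) (x : Equiv.Perm (Fin (n + 1))) : Finset (Fin (n + 1)) :=
  x.support.filter fun k => ¬ IsBlockMin n x k

open Classical in
/-- `U_x` : the support of `x` minus the set of maxima of blocks of `x`. -/
noncomputable def Uset (n : ℕ) (x : Equiv.Perm (Fin (n + 1))) : Finset (Fin (n + 1)) :=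
  x.support.filter fun k => ¬ IsBlockMax n x k

/-- The set `I(n)` of pairs `(D, U)` with `|D| = |U|` and `d_i < u_i` for all `i`
(in the increasing enumerations). -/
def Iset (n : ℕ) : Set (Finset (Fin (n + 1)) × Finset (Fin (n + 1))) :=
  {p | ∃ h : p.1.card = p.2.card, ∀ i : Fin p.1.card,
    p.1.orderEmbOfFin rfl i < p.2.orderEmbOfFin h.symm i}

/-- `R_c = {c^m(1) : 0 ≤ m ≤ k₀}` where `k₀ ≥ 1` is minimal with `c^{k₀}(1) = n+1`
(0-indexed: `1 ↦ 0` and `n+1 ↦ Fin.last n`). -/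
def Rset (n : ℕ) (c : Equiv.Perm (Fin (n + 1))) : Set (Fin (n + 1)) :=
  {j | ∃ m : ℕ, (c ^ m) (0 : Fin (n + 1)) = j ∧
    ∀ m', 0 < m' → m' < m → (c ^ m') (0 : Fin (n + 1)) ≠ Fin.last n}

/-- `L_c = {1, n+1} ∪ ({1,…,n+1} \ R_c)` (0-indexed). -/
def Lset (n : ℕ) (c : Equiv.Perm (Fin (n + 1))) : Set (Fin (n + 1)) :=
  {0, Fin.last n} ∪ (Rset n c)ᶜ

open Classical in
/-- `M_x^c = D_x ∩ U_x ∩ L_c`. -/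
noncomputable def Mset (n : ℕ) (c x : Equiv.Perm (Fin (n + 1))) : Finset (Fin (n + 1)) :=
  (Dset n x ∩ Uset n x).filter fun k => k ∈ Lset n c

open Classical in
/-- `N_x^c` : indices in `L_c`, not in `supp(x)`, nested in at least one block of `x`. -/
noncomputable def Nnest (n : ℕ) (c x : Equiv.Perm (Fin (n + 1))) : Finset (Fin (n + 1)) :=
  Finset.univ.filter fun k =>
    k ∈ Lset n c ∧ k ∉ x.support ∧ ∃ B, IsBlock n x B ∧ Nested n k B

/-- `l` is a reduced expression of `w`. -/
def IsReduced (n : ℕ) (w : Equiv.Perm (Fin (n + 1))) (l : List ℕ) : Prop :=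
  IsWord n l ∧ wordProd n l = w ∧
    ∀ l', IsWord n l' → wordProd n l' = w → l.length ≤ l'.length

/-- A single commutation move `s_a s_b ↦ s_b s_a` (with `|a - b| ≥ 2`) on words. -/
def CommMove (l l' : List ℕ) : Prop :=
  ∃ (u v : List ℕ) (a b : ℕ), (a + 2 ≤ b ∨ b + 2 ≤ a) ∧
    l = u ++ a :: b :: v ∧ l' = u ++ b :: a :: v

/-- Fully commutative: any two reduced expressions are related by commutation moves. -/
def IsFC (n : ℕ) (w : Equiv.Perm (Fin (n + 1))) : Prop :=
  ∀ l l', IsReduced n w l → IsReduced n w l' → Relation.ReflTransGen CommMove l l'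

/-- `run i j = [i, i-1, …, j]` (for `j ≤ i`). -/
def run (i j : ℕ) : List ℕ := (List.range (i + 1 - j)).map fun t => i - t

/-- The word `(s_{i_1} ⋯ s_{j_1}) ⋯ (s_{i_k} ⋯ s_{j_k})` of normal-form shape. -/
def normalWord (k : ℕ) (i j : Fin k → ℕ) : List ℕ :=
  (List.ofFn fun m : Fin k => run (i m) (j m)).flatten

/-- The data `(k, i, j)` is the normal form of `w`. -/
def IsNormalFormOf (n : ℕ) (w : Equiv.Perm (Fin (n + 1))) (k : ℕ) (i j : Fin k → ℕ) : Prop :=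
  (∀ m, i m < n) ∧ (∀ m, j m ≤ i m) ∧ StrictMono i ∧ StrictMono j ∧
    IsReduced n w (normalWord k i j)

/-- A word of normal-form shape. -/
def NormalShape (n : ℕ) (l : List ℕ) : Prop :=
  ∃ (k : ℕ) (i j : Fin k → ℕ), (∀ m, i m < n) ∧ (∀ m, j m ≤ i m) ∧
    StrictMono i ∧ StrictMono j ∧ l = normalWord k i j

/-- `a ∈ I_w` (letters 0-indexed). -/
def memIset (n : ℕ) (w : Equiv.Perm (Fin (n + 1))) (a : ℕ) : Prop :=
  ∃ (k : ℕ) (i j : Fin k → ℕ), IsNormalFormOf n w k i j ∧ ∃ m, i m = a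

/-- `a ∈ J_w` (letters 0-indexed). -/
def memJset (n : ℕ) (w : Equiv.Perm (Fin (n + 1))) (a : ℕ) : Prop :=
  ∃ (k : ℕ) (i j : Fin k → ℕ), IsNormalFormOf n w k i j ∧ ∃ m, j m = a

/-- The characterizing property of the bijection `φ : NC(S_{n+1},c) → FC(S_{n+1})`. -/
def PhiCharOn (n : ℕ) (c : Equiv.Perm (Fin (n + 1)))
    (φ : Equiv.Perm (Fin (n + 1)) → Equiv.Perm (Fin (n + 1))) : Prop :=
  Set.BijOn φ (NC n c) {w | IsFC n w} ∧
  ∀ x ∈ NC n c, ∀ k : Fin (n + 1),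
    (memJset n (φ x) (k : ℕ) ↔
      (k ∈ Rset n c ∧ k ∈ Dset n x) ∨ (k ∈ Lset n c ∧ IsBlockMin n x k) ∨
      (k ∈ Lset n c ∧ k ∉ x.support ∧ ∃ B, IsBlock n x B ∧ Nested n k B)) ∧
    ((∃ a : ℕ, a + 1 = (k : ℕ) ∧ memIset n (φ x) a) ↔
      (k ∈ Rset n c ∧ k ∈ Uset n x) ∨ (k ∈ Lset n c ∧ IsBlockMax n x k) ∨
      (k ∈ Lset n c ∧ k ∉ x.support ∧ ∃ B, IsBlock n x B ∧ Nested n k B))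

/-- `(a,b)` is a bump of the block `B`. -/
def IsBump (n : ℕ) (a b : Fin (n + 1)) (B : Finset (Fin (n + 1))) : Prop :=
  a < b ∧ a ∈ B ∧ b ∈ B ∧ ∀ j ∈ B, ¬ (a < j ∧ j < b)

/-- `L` is a distinguished expression of the block `B` of `x`: it lists the bumps of `B`,
each exactly once, and its product (as transpositions) is the cycle of `x` on `B`. -/
def IsDistinguished (n : ℕ) (x : Equiv.Perm (Fin (n + 1))) (B : Finset (Fin (n + 1)))
    (L : List (Fin (n + 1) × Fin (n + 1))) : Prop :=
  L.Nodup ∧ (∀ p, p ∈ L ↔ IsBump n p.1 p.2 B) ∧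
    ∀ j, ((L.map fun p => Equiv.swap p.1 p.2).prod) j = if j ∈ B then x j else j

/-- The key ordering the blocks: the minimal `m ≥ 1` with `c^{-m}(n+1) = min B`. -/
noncomputable def blockKey (n : ℕ) (c : Equiv.Perm (Fin (n + 1)))
    (B : Finset (Fin (n + 1))) : ℕ :=
  sInf {m | 1 ≤ m ∧ ∃ b ∈ B, (∀ j ∈ B, b ≤ j) ∧ (c⁻¹ ^ m) (Fin.last n) = b}

/-- `L` encodes a standard form `m_x^c` of `x`: the list (in order) of the bumps whose
syllables, concatenated, give the standard form; the blocks are taken in increasing order,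
and a distinguished expression is used inside each block. -/
def IsStdFormData (n : ℕ) (c x : Equiv.Perm (Fin (n + 1)))
    (L : List (Fin (n + 1) × Fin (n + 1))) : Prop :=
  ∃ (Bs : List (Finset (Fin (n + 1)))) (Ls : List (List (Fin (n + 1) × Fin (n + 1)))),
    Bs.Nodup ∧ (∀ B, B ∈ Bs ↔ IsBlock n x B) ∧
    Bs.Chain' (fun B B' => blockKey n c B < blockKey n c B') ∧
    List.Forall₂ (IsDistinguished n x) Bs Ls ∧
    L = Ls.flatten

/-- The syllable of the transposition `(a, b)` (0-indexed points, `a < b`):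
the word `s_{b-1} ⋯ s_{a+1} s_a s_{a+1} ⋯ s_{b-1}` in 0-indexed letters. -/
def syllable (a b : ℕ) : List ℕ := run (b - 1) a ++ (run (b - 1) (a + 1)).reverse

/-- The word of the standard form encoded by `L` (concatenation of the syllables). -/
def stdWord (n : ℕ) (L : List (Fin (n + 1) × Fin (n + 1))) : List ℕ :=
  (L.map fun p => syllable (p.1 : ℕ) (p.2 : ℕ)).flatten

/-- The letter `t` is a center of (a syllable of) the standard form encoded by `L`. -/
def IsCenterOf (n : ℕ) (L : List (Fin (n + 1) × Fin (n + 1))) (t : ℕ) : Prop :=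
  ∃ p ∈ L, (p.1 : ℕ) = t

/-- The letter `t` occurs in the syllable of the bump `p`. -/
def occursIn (n : ℕ) (p : Fin (n + 1) × Fin (n + 1)) (t : ℕ) : Prop :=
  (p.1 : ℕ) ≤ t ∧ t < (p.2 : ℕ)

/-- The selection rule for the extracted word `w_x^c`: the letter `t` is taken from the
right part of the syllables in which it occurs twice. -/
def selRight (n : ℕ) (c : Equiv.Perm (Fin (n + 1)))
    (L : List (Fin (n + 1) × Fin (n + 1))) (t : ℕ) : Prop :=
  (IsCenterOf n L t ∧ ∃ h : t < n + 1, (⟨t, h⟩ : Fin (n + 1)) ∈ Rset n c) ∨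
  (¬ IsCenterOf n L t ∧ ∃ h : t < n + 1, (⟨t, h⟩ : Fin (n + 1)) ∈ Lset n c)

open Classical in
/-- The subword extracted from a single syllable: the center is kept, and any letter
occurring twice is kept from the left or right part according to `sel`. -/
noncomputable def extractSyllable (sel : ℕ → Prop) (a b : ℕ) : List ℕ :=
  (run (b - 1) a).filter (fun t => decide (t = a ∨ ¬ sel t)) ++
  ((run (b - 1) (a + 1)).reverse).filter fun t => decide (sel t)

/-- The extracted word `w_x^c`. -/
noncomputable def extractWord (n : ℕ) (c : Equiv.Perm (Fin (n + 1)))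
    (L : List (Fin (n + 1) × Fin (n + 1))) : List ℕ :=
  (L.map fun p => extractSyllable (selRight n c L) (p.1 : ℕ) (p.2 : ℕ)).flatten

/-! The syllable of a bump `(m, b)` contains the letter `a` twice if `m < a < b`, once if
`a = m`, and otherwise not at all; between the two occurrences lies the syllable of `(m, a)`.
A reduced expression of a fully commutative element has no factor `a v a` with `v` a subword of
that syllable: if `v` avoids `a - 1`, then `a` commutes past `v` and cancels; if `v` contains
`a - 1` once, a braid `a (a-1) a` appears and changes the number of `a`s, which commutation
moves cannot do; if `v` contains `a - 1` twice, what lies in between is a subword of the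
syllable of `(m, a - 1)`, and we induct. Hence a reduced subword of the standard form takes `a`
at most once from each syllable. As the bumps of `x` have distinct left endpoints, at most one
syllable has center `a`, and none if `s_a` is not a center. -/

open List

lemma wordProd_cons (n a : ℕ) (l : List ℕ) :
    wordProd n (a :: l) = simpleRefl n a * wordProd n l := by
  simp [wordProd]

lemma wordProd_append (n : ℕ) (l₁ l₂ : List ℕ) :
    wordProd n (l₁ ++ l₂) = wordProd n l₁ * wordProd n l₂ := by
  simp [wordProd]

lemma simpleRefl_mul_self (n t : ℕ) : simpleRefl n t * simpleRefl n t = 1 := by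
  unfold simpleRefl
  split <;> simp

lemma simpleRefl_commute {n i j : ℕ} (h : i + 2 ≤ j) :
    Commute (simpleRefl n i) (simpleRefl n j) := by
  unfold simpleRefl
  split_ifs with hi hj
  · refine (Equiv.Perm.disjoint_swap_swap ?_).commute
    simp only [nodup_cons, mem_cons, not_mem_nil, nodup_nil, Fin.ext_iff, or_false,
      not_false_eq_true, and_true]
    omega
  all_goals simp

lemma simpleRefl_braid {n s : ℕ} (h : s + 1 < n) :
    simpleRefl n (s + 1) * simpleRefl n s * simpleRefl n (s + 1)
      = simpleRefl n s * simpleRefl n (s + 1) * simpleRefl n s := by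
  rw [simpleRefl, dif_pos h, simpleRefl, dif_pos (by omega : s < n)]
  set A : Fin (n + 1) := ⟨s, by omega⟩
  set B : Fin (n + 1) := ⟨s + 1, by omega⟩
  set C : Fin (n + 1) := ⟨s + 1 + 1, by omega⟩
  have hAB : A ≠ B := by simp [A, B]
  have hAC : A ≠ C := by simp only [ne_eq, Fin.mk.injEq, A, C]; omega
  have hBC : B ≠ C := by simp [B, C]
  rw [Equiv.swap_mul_swap_mul_swap hAB hAC, Equiv.swap_comm A B, Equiv.swap_comm B C,
    Equiv.swap_mul_swap_mul_swap hBC.symm hAC.symm, Equiv.swap_comm]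

lemma CommMove.count_eq {l l' : List ℕ} (h : CommMove l l') (a : ℕ) :
    l.count a = l'.count a := by
  obtain ⟨u, v, b, c, -, rfl, rfl⟩ := h
  simp only [count_append, count_cons]
  omega

lemma count_eq_of_commMoves {l l' : List ℕ} (h : Relation.ReflTransGen CommMove l l')
    (a : ℕ) : l.count a = l'.count a := by
  induction h with
  | refl => rfl
  | tail _ h ih => rw [ih, h.count_eq]

lemma IsReduced.of_length_eq {n : ℕ} {w : Equiv.Perm (Fin (n + 1))} {l l' : List ℕ}
    (h : IsReduced n w l) (hword : IsWord n l') (hprod : wordProd n l' = w)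
    (hlen : l'.length = l.length) : IsReduced n w l' :=
  ⟨hword, hprod, fun l'' hw'' hp'' => hlen ▸ h.2.2 l'' hw'' hp''⟩

lemma commute_simpleRefl_wordProd {n t : ℕ} {v : List ℕ} (hv : ∀ e ∈ v, e + 2 ≤ t) :
    Commute (simpleRefl n t) (wordProd n v) :=
  Commute.list_prod_right _ _ <| by
    simp only [mem_map]
    rintro _ ⟨e, he, rfl⟩
    exact (simpleRefl_commute (hv e he)).symm

lemma not_isReduced_of_cancel {n t : ℕ} {w : Equiv.Perm (Fin (n + 1))} {A v B : List ℕ}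
    (hv : ∀ e ∈ v, e + 2 ≤ t) : ¬ IsReduced n w (A ++ t :: (v ++ t :: B)) := by
  rintro ⟨hword, hprod, hmin⟩
  have hprod' : wordProd n (A ++ v ++ B) = w := by
    rw [← hprod]
    simp only [wordProd_append, wordProd_cons, mul_assoc]
    rw [(commute_simpleRefl_wordProd hv).left_comm, ← mul_assoc (simpleRefl n t),
      simpleRefl_mul_self, one_mul]
  have hword' : IsWord n (A ++ v ++ B) := fun e he =>
    hword e (by simp only [mem_append, mem_cons] at he ⊢; tauto)
  have := hmin _ hword' hprod'
  simp at this

lemma IsFC.not_isReduced_of_braid {n s : ℕ} {w : Equiv.Perm (Fin (n + 1))} (hw : IsFC n w)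
    {A v₁ v₂ B : List ℕ} (hv₁ : ∀ e ∈ v₁, e + 2 ≤ s + 1) (hv₂ : ∀ e ∈ v₂, e + 2 ≤ s + 1) :
    ¬ IsReduced n w (A ++ (s + 1) :: ((v₁ ++ s :: v₂) ++ (s + 1) :: B)) := by
  intro hl
  have hs : s + 1 < n := hl.1 _ (by simp)
  have hbraid : ∀ Z, simpleRefl n (s + 1) * (simpleRefl n s * (simpleRefl n (s + 1) * Z))
      = simpleRefl n s * (simpleRefl n (s + 1) * (simpleRefl n s * Z)) := fun Z => by
    rw [← mul_assoc, ← mul_assoc, simpleRefl_braid hs, mul_assoc, mul_assoc]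
  have hl' : IsReduced n w (A ++ (v₁ ++ s :: (s + 1) :: s :: (v₂ ++ B))) := by
    refine hl.of_length_eq (fun e he => ?_) ?_ (by simp only [length_append, length_cons]; omega)
    · have : e = s ∨ e ∈ A ++ (s + 1) :: ((v₁ ++ s :: v₂) ++ (s + 1) :: B) := by
        simp only [mem_append, mem_cons] at he ⊢
        tauto
      rcases this with rfl | he
      · omega
      · exact hl.1 e he
    · rw [← hl.2.1]
      simp only [wordProd_append, wordProd_cons, mul_assoc]
      rw [(commute_simpleRefl_wordProd hv₁).left_comm,
        ← (commute_simpleRefl_wordProd hv₂).left_comm, hbraid]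
  have hcount := count_eq_of_commMoves (hw _ _ hl hl') (s + 1)
  simp only [count_append, count_cons, beq_iff_eq] at hcount
  split_ifs at hcount <;> omega

lemma run_succ {i j : ℕ} (h : j ≤ i + 1) : run (i + 1) j = (i + 1) :: run i j := by
  unfold run
  rw [show i + 1 + 1 - j = i + 1 - j + 1 by omega, List.range_succ_eq_map]
  simp

lemma syllable_succ_self (m : ℕ) : syllable m (m + 1) = [m] := by
  simp [syllable, run]

lemma syllable_succ {m t : ℕ} (h : m < t) : syllable m (t + 1) = t :: (syllable m t ++ [t]) := by
  obtain ⟨s, rfl⟩ : ∃ s, t = s + 1 := ⟨t - 1, by omega⟩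
  simp only [syllable, Nat.add_sub_cancel]
  rw [run_succ (by omega), run_succ (by omega)]
  simp

lemma count_syllable (a : ℕ) {m b : ℕ} (h : m < b) :
    (syllable m b).count a =
      (if m ≤ a ∧ a < b then 1 else 0) + (if m < a ∧ a < b then 1 else 0) := by
  induction b, h using Nat.le_induction with
  | base =>
    rw [syllable_succ_self, count_singleton]
    split_ifs <;> simp_all <;> omega
  | succ b hb ih =>
    rw [syllable_succ hb, count_cons, count_append, count_singleton, ih]
    split_ifs <;> simp_all <;> omega

lemma lt_of_mem_syllable {e m t : ℕ} (h : m < t) (he : e ∈ syllable m t) : e < t := by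
  have := count_pos_iff.2 he
  rw [count_syllable e h] at this
  split_ifs at this <;> omega

lemma syllable_eq_append {m a b : ℕ} (hma : m < a) (hab : a < b) :
    ∃ P Q, a ∉ P ∧ a ∉ Q ∧ syllable m b = P ++ a :: (syllable m a ++ a :: Q) := by
  induction b, hab using Nat.le_induction with
  | base => exact ⟨[], [], by simp, by simp, by simp [syllable_succ hma]⟩
  | succ b hab ih =>
    obtain ⟨P, Q, hP, hQ, h⟩ := ih
    refine ⟨b :: P, Q ++ [b], by simp only [mem_cons, hP, or_false]; omega,
      by simp only [mem_append, hQ, mem_cons, not_mem_nil, or_false, false_or]; omega, ?_⟩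
    rw [syllable_succ (by omega), h]
    simp

def HasSyllableFactor (a : ℕ) (l : List ℕ) : Prop :=
  ∃ m < a, ∃ A v B, v <+ syllable m a ∧ l = A ++ a :: (v ++ a :: B)

lemma HasSyllableFactor.append_left {a : ℕ} {l : List ℕ} (h : HasSyllableFactor a l)
    (l₀ : List ℕ) : HasSyllableFactor a (l₀ ++ l) := by
  obtain ⟨m, hm, A, v, B, hv, rfl⟩ := h
  exact ⟨m, hm, l₀ ++ A, v, B, hv, by simp⟩

lemma HasSyllableFactor.append_right {a : ℕ} {l : List ℕ} (h : HasSyllableFactor a l)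
    (l₁ : List ℕ) : HasSyllableFactor a (l ++ l₁) := by
  obtain ⟨m, hm, A, v, B, hv, rfl⟩ := h
  exact ⟨m, hm, A, v, B ++ l₁, hv, by simp⟩

theorem IsFC.not_hasSyllableFactor {n a : ℕ} {w : Equiv.Perm (Fin (n + 1))} (hw : IsFC n w)
    {l : List ℕ} (hl : IsReduced n w l) : ¬ HasSyllableFactor a l := by
  rintro ⟨m, hm, A, v, B, hv, rfl⟩
  induction a generalizing m A v B with
  | zero => omega
  | succ s ih =>
    rcases (show m = s ∨ m < s by omega) with rfl | hms
    · rw [syllable_succ_self] at hv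
      rcases sublist_singleton.1 hv with rfl | rfl
      · exact not_isReduced_of_cancel (by simp) hl
      · exact hw.not_isReduced_of_braid (v₁ := []) (v₂ := []) (by simp) (by simp) hl
    · have hS : ∀ e ∈ syllable m s, e + 2 ≤ s + 1 := fun e he => by
        have := lt_of_mem_syllable hms he
        omega
      rw [syllable_succ hms] at hv
      rcases sublist_cons_iff.1 hv with hv | ⟨r, rfl, hr⟩
      · obtain ⟨v₁, v₂, rfl, h₁, h₂⟩ := sublist_append_iff.1 hv
        have hv₁ : ∀ e ∈ v₁, e + 2 ≤ s + 1 := fun e he => hS e (h₁.mem he)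
        rcases sublist_singleton.1 h₂ with rfl | rfl
        · exact not_isReduced_of_cancel (by simpa using hv₁) hl
        · exact hw.not_isReduced_of_braid hv₁ (v₂ := []) (by simp) hl
      · obtain ⟨r₁, r₂, rfl, h₁, h₂⟩ := sublist_append_iff.1 hr
        have hr₁ : ∀ e ∈ r₁, e + 2 ≤ s + 1 := fun e he => hS e (h₁.mem he)
        rcases sublist_singleton.1 h₂ with rfl | rfl
        · exact hw.not_isReduced_of_braid (v₁ := []) (by simp) hr₁ (by simpa using hl)
        · exact ih m hms (A ++ [s + 1]) r₁ ((s + 1) :: B) h₁ (by simpa using hl)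

lemma count_le_one_of_sublist_syllable {l : List ℕ} {a m b : ℕ} (hmb : m < b)
    (hl : l <+ syllable m b) (hfac : ¬ HasSyllableFactor a l) : l.count a ≤ 1 := by
  by_contra! htwo
  have hle := hl.count_le a
  rw [count_syllable a hmb] at hle
  obtain ⟨hma, hab⟩ : m < a ∧ a < b := by split_ifs at hle <;> omega
  obtain ⟨P, Q, hP, hQ, heq⟩ := syllable_eq_append hma hab
  have hS : a ∉ syllable m a := fun h => (lt_of_mem_syllable hma h).false
  rw [heq] at hl
  apply hfac
  obtain ⟨l₁, l₂, rfl, h₁, h₂⟩ := sublist_append_iff.1 hl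
  have c₁ : l₁.count a = 0 := count_eq_zero.2 fun h => hP (h₁.mem h)
  rcases sublist_cons_iff.1 h₂ with h₂ | ⟨r, rfl, hr⟩
  · have := h₂.count_le a
    simp only [count_append, count_cons_self, count_eq_zero.2 hS, count_eq_zero.2 hQ] at this
    simp only [count_append, c₁] at htwo
    omega
  obtain ⟨r₁, r₂, rfl, hr₁, hr₂⟩ := sublist_append_iff.1 hr
  rcases sublist_cons_iff.1 hr₂ with hr₂ | ⟨q, rfl, -⟩
  · have c₂ : r₁.count a = 0 := count_eq_zero.2 fun h => hS (hr₁.mem h)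
    have c₃ : r₂.count a = 0 := count_eq_zero.2 fun h => hQ (hr₂.mem h)
    simp [count_append, c₁, c₂, c₃] at htwo
  · exact ⟨m, hma, l₁, r₁, q, hr₁, by simp⟩

lemma stdWord_cons (n : ℕ) (p : Fin (n + 1) × Fin (n + 1))
    (L : List (Fin (n + 1) × Fin (n + 1))) :
    stdWord n (p :: L) = syllable p.1 p.2 ++ stdWord n L := by
  simp [stdWord]

lemma two_mul_count_le_of_sublist_stdWord {n a : ℕ} {L : List (Fin (n + 1) × Fin (n + 1))}
    (hL : ∀ p ∈ L, p.1 < p.2) {l : List ℕ} (hl : l <+ stdWord n L)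
    (hfac : ¬ HasSyllableFactor a l) :
    2 * l.count a ≤ (stdWord n L).count a + (L.map fun p => (p.1 : ℕ)).count a := by
  induction L generalizing l with
  | nil => simp_all [stdWord]
  | cons p L ih =>
    rw [stdWord_cons] at hl ⊢
    obtain ⟨l₁, l₂, rfl, h₁, h₂⟩ := sublist_append_iff.1 hl
    have hp : (p.1 : ℕ) < p.2 := hL p mem_cons_self
    have c₁ := count_le_one_of_sublist_syllable hp h₁ fun h => hfac (h.append_right l₂)
    have c₂ := ih (fun q hq => hL q (mem_cons_of_mem p hq)) h₂ fun h => hfac (h.append_left l₁)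
    have hsyl := h₁.count_le a
    simp only [count_append, map_cons, count_cons, beq_iff_eq, count_syllable a hp] at hsyl ⊢
    split_ifs at hsyl ⊢ <;> omega

lemma IsBlock.eq_of_mem {n : ℕ} {x : Equiv.Perm (Fin (n + 1))} {B B' : Finset (Fin (n + 1))}
    (hB : IsBlock n x B) (hB' : IsBlock n x B') {a : Fin (n + 1)} (ha : a ∈ B) (ha' : a ∈ B') :
    B = B' := by
  obtain ⟨b, -, hb⟩ := hB
  obtain ⟨b', -, hb'⟩ := hB'
  have h : x.SameCycle b b' := ((hb a).1 ha).trans ((hb' a).1 ha').symm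
  ext z
  rw [hb, hb']
  exact ⟨h.symm.trans, h.trans⟩

lemma IsBump.snd_eq {n : ℕ} {a b b' : Fin (n + 1)} {B : Finset (Fin (n + 1))}
    (h : IsBump n a b B) (h' : IsBump n a b' B) : b = b' := by
  by_contra hne
  rcases lt_or_gt_of_ne hne with hlt | hlt
  · exact h'.2.2.2 b h.2.2.1 ⟨h.1, hlt⟩
  · exact h.2.2.2 b' h'.2.2.1 ⟨h'.1, hlt⟩

section Distinguished

variable {n : ℕ} {x : Equiv.Perm (Fin (n + 1))} {Bs : List (Finset (Fin (n + 1)))}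
  {Ls : List (List (Fin (n + 1) × Fin (n + 1)))}

lemma exists_isBump_of_mem_flatten (hf : Forall₂ (IsDistinguished n x) Bs Ls)
    {p : Fin (n + 1) × Fin (n + 1)} (hp : p ∈ Ls.flatten) : ∃ B ∈ Bs, IsBump n p.1 p.2 B := by
  induction hf with
  | nil => simp at hp
  | cons hd _ ih =>
    rcases mem_append.1 hp with hp | hp
    · exact ⟨_, mem_cons_self, (hd.2.1 p).1 hp⟩
    · obtain ⟨B, hB, hb⟩ := ih hp
      exact ⟨B, mem_cons_of_mem _ hB, hb⟩

lemma nodup_map_fst_flatten (hf : Forall₂ (IsDistinguished n x) Bs Ls) (hBs : Bs.Nodup)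
    (hblocks : ∀ B ∈ Bs, IsBlock n x B) : (Ls.flatten.map fun p => (p.1 : ℕ)).Nodup := by
  induction hf with
  | nil => simp
  | @cons B l Bs Ls hd tl ih =>
    have hbump : ∀ p ∈ l, IsBump n p.1 p.2 B := fun p hp => (hd.2.1 p).1 hp
    rw [flatten_cons, map_append, nodup_append]
    refine ⟨hd.1.map_on fun p hp q hq hpq => ?_,
      ih (nodup_cons.1 hBs).2 fun B' hB' => hblocks B' (mem_cons_of_mem B hB'), ?_⟩
    · have h₁ : p.1 = q.1 := Fin.ext hpq
      exact Prod.ext h₁ ((h₁ ▸ hbump p hp).snd_eq (hbump q hq))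
    · simp only [mem_map]
      rintro _ ⟨p, hp, rfl⟩ _ ⟨q, hq, rfl⟩ hpq
      obtain ⟨B', hB', hq'⟩ := exists_isBump_of_mem_flatten tl hq
      have : B = B' := (hblocks B mem_cons_self).eq_of_mem
        (hblocks B' (mem_cons_of_mem B hB')) (hbump p hp).2.1 (Fin.ext hpq ▸ hq'.2.1)
      exact (nodup_cons.1 hBs).1 (this ▸ hB')

end Distinguished

lemma IsStdFormData.fst_lt_snd {n : ℕ} {c x : Equiv.Perm (Fin (n + 1))}
    {L : List (Fin (n + 1) × Fin (n + 1))} (hL : IsStdFormData n c x L) :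
    ∀ p ∈ L, p.1 < p.2 := by
  obtain ⟨Bs, Ls, -, -, -, hf, rfl⟩ := hL
  intro p hp
  obtain ⟨B, -, hB⟩ := exists_isBump_of_mem_flatten hf hp
  exact hB.1

/-- The blocks of `x` are disjoint, and within a block a bump is determined by its left
endpoint. -/
lemma IsStdFormData.nodup_map_fst {n : ℕ} {c x : Equiv.Perm (Fin (n + 1))}
    {L : List (Fin (n + 1) × Fin (n + 1))} (hL : IsStdFormData n c x L) :
    (L.map fun p => (p.1 : ℕ)).Nodup := by
  obtain ⟨Bs, Ls, hBs, hblocks, -, hf, rfl⟩ := hL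
  exact nodup_map_fst_flatten hf hBs fun B hB => (hblocks B).1 hB

theorem statement_18_general (n : ℕ) (c : Equiv.Perm (Fin (n + 1)))
    (x : Equiv.Perm (Fin (n + 1)))
    (L : List (Fin (n + 1) × Fin (n + 1))) (hL : IsStdFormData n c x L)
    (w : Equiv.Perm (Fin (n + 1))) (hw : IsFC n w)
    (hsub : ∃ l, IsReduced n w l ∧ l.Sublist (stdWord n L))
    (a : ℕ) :
    ∀ l, IsReduced n w l →
      (IsCenterOf n L a → 2 * l.count a - 1 ≤ (stdWord n L).count a) ∧
      (¬ IsCenterOf n L a → 2 * l.count a ≤ (stdWord n L).count a) := by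
  intro l hl
  obtain ⟨l₀, hl₀, hsub⟩ := hsub
  have hcount : l.count a = l₀.count a := count_eq_of_commMoves (hw l l₀ hl hl₀) a
  have hbound := two_mul_count_le_of_sublist_stdWord hL.fst_lt_snd hsub
    (hw.not_hasSyllableFactor (a := a) hl₀)
  have hcenters : (L.map fun p => (p.1 : ℕ)).count a ≤ 1 :=
    nodup_iff_count_le_one.1 hL.nodup_map_fst a
  refine ⟨fun _ => by omega, fun hnot => ?_⟩
  have : (L.map fun p => (p.1 : ℕ)).count a = 0 :=
    count_eq_zero.2 fun h => hnot (by simpa [IsCenterOf] using h)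
  omega

/-- if a fully commutative `w` has a reduced expression which is a sublist
of the standard form `m_x^c`, then (counting occurrences in any reduced expression `l`
of `w`): `2·n_i(w) − 1 ≤ x_i^c` if `s_i` is a center of `m_x^c`, and `2·n_i(w) ≤ x_i^c`
otherwise. -/
theorem statement_18 (n : ℕ) (hn : 1 ≤ n) (c : Equiv.Perm (Fin (n + 1)))
    (hc : IsStdCox n c) (x : Equiv.Perm (Fin (n + 1))) (hx : x ∈ NC n c)
    (L : List (Fin (n + 1) × Fin (n + 1))) (hL : IsStdFormData n c x L)
    (w : Equiv.Perm (Fin (n + 1))) (hw : IsFC n w)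
    (hsub : ∃ l, IsReduced n w l ∧ l.Sublist (stdWord n L))
    (a : ℕ) (ha : a < n) :
    ∀ l, IsReduced n w l →
      (IsCenterOf n L a → 2 * l.count a - 1 ≤ (stdWord n L).count a) ∧
      (¬ IsCenterOf n L a → 2 * l.count a ≤ (stdWord n L).count a) :=
  statement_18_general n c x L hL w hw hsub a

end NCTL
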